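/- For the laziest minimal random walk with parameter p ∈ (0,1), for every integer k ≥ 1, E[(H_n / n^p)^k] converges to k!/Γ(1+kp) as n → ∞. -/

import Mathlib

open MeasureTheory ProbabilityTheory Filter Real

def lazyH {Ω : Type*} (X : ℕ → Ω → ℕ) (n : ℕ) (ω : Ω) : ℕ :=
  ∑ i ∈ Finset.Icc 1 n, X i ω

/-!
Write `h⁽ᴷ⁾ = h (h + 1) ⋯ (h + K - 1)` for the rising factorial. Since `X (n + 1) ∈ {0, 1}`,
`(H + X)⁽ᴷ⁾ = H⁽ᴷ⁾ + K X (H + 1)⁽ᴷ⁻¹⁾`, and conditioning on `ℱ n` replaces `X (n + 1)` by `p H / n`;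
as `H (H + 1)⁽ᴷ⁻¹⁾ = H⁽ᴷ⁾` this gives `E[H (n+1)⁽ᴷ⁾] = (1 + K p / n) E[H n⁽ᴷ⁾]`, hence
`E[H n⁽ᴷ⁾] = K! ∏_{1 ≤ m < n} (1 + K p / m)`, which is `≈ K! n^{Kp} / Γ(1 + Kp)` by Euler's limit
formula for `Γ`. Finally `h^K ≤ h⁽ᴷ⁾ ≤ h^K + C h⁽ᴷ⁻¹⁾`, and `E[H n⁽ᴷ⁻¹⁾] / n^{Kp} = O(n^{-p})`.
-/

open Topology Finset Nat

namespace Nat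

theorem ascFactorial_succ_eq_mul (h j : ℕ) :
    h.ascFactorial (j + 1) = h * (h + 1).ascFactorial j := by
  rw [succ_ascFactorial, ascFactorial_succ]

theorem add_one_ascFactorial_succ (h j : ℕ) :
    (h + 1).ascFactorial (j + 1) = h.ascFactorial (j + 1) + (j + 1) * (h + 1).ascFactorial j := by
  rw [ascFactorial_succ, ascFactorial_succ_eq_mul]
  ring

theorem ascFactorial_succ_le_pow_add (h j : ℕ) :
    h.ascFactorial (j + 1) ≤ h ^ (j + 1) + (j + 1).choose 2 * h.ascFactorial j := by
  induction j with
  | zero => simp [ascFactorial_succ]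
  | succ j ih =>
    have hmono : h * h.ascFactorial j ≤ h.ascFactorial (j + 1) := by
      rw [ascFactorial_succ]
      exact Nat.mul_le_mul_right _ (Nat.le_add_right h j)
    rw [ascFactorial_succ (k := j + 1), choose_succ_succ, choose_one_right]
    calc (h + (j + 1)) * h.ascFactorial (j + 1)
        = h * h.ascFactorial (j + 1) + (j + 1) * h.ascFactorial (j + 1) := by ring
      _ ≤ h * (h ^ (j + 1) + (j + 1).choose 2 * h.ascFactorial j)
          + (j + 1) * h.ascFactorial (j + 1) := by gcongr
      _ = h ^ (j + 2) + (j + 1).choose 2 * (h * h.ascFactorial j)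
          + (j + 1) * h.ascFactorial (j + 1) := by ring
      _ ≤ h ^ (j + 2) + (j + 1).choose 2 * h.ascFactorial (j + 1)
          + (j + 1) * h.ascFactorial (j + 1) := by gcongr
      _ = h ^ (j + 1 + 1) + (j + 1 + (j + 1).choose 2) * h.ascFactorial (j + 1) := by ring

end Nat

namespace Real

theorem prod_range_add_eq_mul_factorial_mul_prod (s : ℝ) (n : ℕ) :
    ∏ j ∈ range (n + 1), (s + j) = s * n ! * ∏ m ∈ Icc 1 n, (1 + s / m) := by
  induction n with
  | zero => simp
  | succ n ih =>
    rw [prod_range_succ, ih, prod_Icc_succ_top (by omega), factorial_succ]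
    push_cast
    field_simp
    ring

theorem tendsto_prod_Icc_one_add_div_div_rpow {s : ℝ} (hs : 0 < s) :
    Tendsto (fun n : ℕ => (∏ m ∈ Icc 1 n, (1 + s / m)) / (n : ℝ) ^ s) atTop
      (𝓝 (Gamma (1 + s))⁻¹) := by
  have hlim : Tendsto (fun n => (s * GammaSeq s n)⁻¹) atTop (𝓝 (Gamma (1 + s))⁻¹) := by
    rw [add_comm, Gamma_add_one hs.ne']
    exact (tendsto_const_nhds.mul (GammaSeq_tendsto_Gamma s)).inv₀
      (mul_ne_zero hs.ne' (Gamma_pos_of_pos hs).ne')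
  refine hlim.congr' ?_
  filter_upwards [eventually_ge_atTop 1] with n hn
  have hpow : 0 < (n : ℝ) ^ s := rpow_pos_of_pos (by exact_mod_cast hn) s
  rw [GammaSeq, prod_range_add_eq_mul_factorial_mul_prod]
  field_simp

theorem tendsto_prod_Ico_one_add_div_div_rpow {s : ℝ} (hs : 0 ≤ s) :
    Tendsto (fun n : ℕ => (∏ m ∈ Ico 1 n, (1 + s / m)) / (n : ℝ) ^ s) atTop
      (𝓝 (Gamma (1 + s))⁻¹) := by
  rcases hs.eq_or_lt with rfl | hs
  · simp
  have hlast : Tendsto (fun n : ℕ => 1 + s / n) atTop (𝓝 1) := by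
    simpa using tendsto_const_nhds.add (tendsto_const_div_atTop_nhds_zero_nat s)
  have hlim := (tendsto_prod_Icc_one_add_div_div_rpow hs).div hlast one_ne_zero
  rw [div_one] at hlim
  refine hlim.congr' ?_
  filter_upwards [eventually_ge_atTop 1] with n hn
  have hpos : 0 < 1 + s / n := by positivity
  rw [Pi.div_apply, ← Ico_add_one_right_eq_Icc, prod_Ico_succ_top hn]
  field_simp

end Real

theorem integral_div_rpow_pow {Ω : Type*} {m0 : MeasurableSpace Ω} {μ : Measure Ω} (f : Ω → ℝ)
    {x : ℝ} (hx : 0 ≤ x) (y : ℝ) (k : ℕ) :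
    ∫ ω, (f ω / x ^ y) ^ k ∂μ = (∫ ω, f ω ^ k ∂μ) / x ^ ((k : ℝ) * y) := by
  rw [← integral_div, mul_comm, rpow_mul_natCast hx]
  simp_rw [div_pow]

section LazyWalk

variable {Ω : Type*} {m0 : MeasurableSpace Ω} {μ : Measure Ω} {ℱ : Filtration ℕ m0} {p : ℝ}
  {X : ℕ → Ω → ℕ}

theorem lazyH_succ (n : ℕ) (ω : Ω) :
    lazyH X (n + 1) ω = lazyH X n ω + X (n + 1) ω :=
  sum_Icc_succ_top (by omega) _

theorem lazyH_le (hXval : ∀ n ω, X n ω ≤ 1) (n : ℕ) (ω : Ω) : lazyH X n ω ≤ n :=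
  (sum_le_sum fun i _ => hXval i ω).trans (by simp)

theorem measurable_lazyH (hadp : ∀ n, Measurable[ℱ n] (X n)) (n : ℕ) :
    Measurable[ℱ n] (lazyH X n) :=
  Finset.measurable_sum _ fun i hi => (hadp i).mono (ℱ.mono (mem_Icc.1 hi).2) le_rfl

theorem norm_comp_lazyH_le (hXval : ∀ n ω, X n ω ≤ 1) (g : ℕ → ℝ) (n : ℕ) (ω : Ω) :
    ‖g (lazyH X n ω)‖ ≤ ∑ i ∈ range (n + 1), ‖g i‖ :=
  single_le_sum (f := fun i => ‖g i‖) (fun _ _ => norm_nonneg _)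
    (mem_range.2 (Nat.lt_succ_of_le (lazyH_le hXval n ω)))

theorem integrable_comp_lazyH [IsFiniteMeasure μ] (hadp : ∀ n, Measurable[ℱ n] (X n))
    (hXval : ∀ n ω, X n ω ≤ 1) (g : ℕ → ℝ) (n : ℕ) :
    Integrable (fun ω => g (lazyH X n ω)) μ :=
  .of_bound ((measurable_of_countable g).comp
      ((measurable_lazyH hadp n).mono (ℱ.le n) le_rfl)).aestronglyMeasurable
    _ (ae_of_all _ (norm_comp_lazyH_le hXval g n))

theorem integrable_comp_lazyH_mul [IsFiniteMeasure μ] (hadp : ∀ n, Measurable[ℱ n] (X n))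
    (hXval : ∀ n ω, X n ω ≤ 1) (g : ℕ → ℝ) (n : ℕ) :
    Integrable (fun ω => g (lazyH X n ω) * X (n + 1) ω) μ := by
  refine (integrable_comp_lazyH hadp hXval g n).mul_bdd ?_ (c := 1) (ae_of_all _ fun ω => ?_)
  · exact ((measurable_of_countable _).comp
      ((hadp (n + 1)).mono (ℱ.le (n + 1)) le_rfl)).aestronglyMeasurable
  · simpa using hXval (n + 1) ω

theorem integral_comp_lazyH_mul [IsFiniteMeasure μ] (hadp : ∀ n, Measurable[ℱ n] (X n))
    (hXval : ∀ n ω, X n ω ≤ 1) {n : ℕ}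
    (hcond : μ[(fun ω => (X (n + 1) ω : ℝ)) | ℱ n] =ᵐ[μ] fun ω => p * (lazyH X n ω : ℝ) / n)
    (g : ℕ → ℝ) :
    ∫ ω, g (lazyH X n ω) * X (n + 1) ω ∂μ = p / n * ∫ ω, lazyH X n ω * g (lazyH X n ω) ∂μ := by
  have hg : StronglyMeasurable[ℱ n] (fun ω => g (lazyH X n ω)) :=
    ((measurable_of_countable g).comp (measurable_lazyH hadp n)).stronglyMeasurable
  have hX : Integrable (fun ω => (X (n + 1) ω : ℝ)) μ := by
    simpa using integrable_comp_lazyH_mul hadp hXval (fun _ => 1) n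
  have hpull := condExp_stronglyMeasurable_mul_of_bound (ℱ.le n) hg hX _
    (ae_of_all _ (norm_comp_lazyH_le hXval g n))
  calc ∫ ω, g (lazyH X n ω) * X (n + 1) ω ∂μ
      = ∫ ω, (μ[(fun ω => g (lazyH X n ω)) * (fun ω => (X (n + 1) ω : ℝ)) | ℱ n]) ω ∂μ :=
        (integral_condExp (ℱ.le n)).symm
    _ = ∫ ω, g (lazyH X n ω) * (p * lazyH X n ω / n) ∂μ := by
        refine integral_congr_ae (hpull.trans ?_)
        filter_upwards [hcond] with ω hω
        simp only [Pi.mul_apply, hω]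
    _ = p / n * ∫ ω, lazyH X n ω * g (lazyH X n ω) ∂μ := by
        rw [← integral_const_mul]
        congr with ω
        ring

theorem integral_ascFactorial_lazyH_succ [IsFiniteMeasure μ]
    (hadp : ∀ n, Measurable[ℱ n] (X n)) (hXval : ∀ n ω, X n ω ≤ 1) {n : ℕ}
    (hcond : μ[(fun ω => (X (n + 1) ω : ℝ)) | ℱ n] =ᵐ[μ] fun ω => p * (lazyH X n ω : ℝ) / n)
    (K : ℕ) :
    ∫ ω, ((lazyH X (n + 1) ω).ascFactorial K : ℝ) ∂μ =
      (1 + K * p / n) * ∫ ω, ((lazyH X n ω).ascFactorial K : ℝ) ∂μ := by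
  obtain _ | j := K
  · simp
  set g : ℕ → ℝ := fun h => ((h + 1).ascFactorial j : ℝ)
  have hstep : ∀ ω, ((lazyH X (n + 1) ω).ascFactorial (j + 1) : ℝ) =
      (lazyH X n ω).ascFactorial (j + 1) + (j + 1) * (g (lazyH X n ω) * X (n + 1) ω) := by
    intro ω
    rw [lazyH_succ]
    rcases Nat.le_one_iff_eq_zero_or_eq_one.1 (hXval (n + 1) ω) with hx | hx
    · simp [hx]
    · rw [hx, add_one_ascFactorial_succ]
      push_cast [g]
      ring
  have hmul : ∀ h : ℕ, (h : ℝ) * g h = h.ascFactorial (j + 1) := fun h => by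
    simp only [g]
    exact_mod_cast (ascFactorial_succ_eq_mul h j).symm
  simp_rw [hstep]
  rw [integral_add (integrable_comp_lazyH hadp hXval (fun h => (h.ascFactorial (j + 1) : ℝ)) n)
      ((integrable_comp_lazyH_mul hadp hXval g n).const_mul _),
    integral_const_mul, integral_comp_lazyH_mul hadp hXval hcond g]
  simp_rw [hmul]
  push_cast
  ring

theorem integral_ascFactorial_lazyH [IsProbabilityMeasure μ]
    (hadp : ∀ n, Measurable[ℱ n] (X n)) (hXval : ∀ n ω, X n ω ≤ 1)
    (hX1 : ∀ᵐ ω ∂μ, X 1 ω = 1)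
    (hcond : ∀ n : ℕ, 1 ≤ n →
      μ[(fun ω => (X (n + 1) ω : ℝ)) | ℱ n] =ᵐ[μ] fun ω => p * (lazyH X n ω : ℝ) / n)
    (K : ℕ) {n : ℕ} (hn : 1 ≤ n) :
    ∫ ω, ((lazyH X n ω).ascFactorial K : ℝ) ∂μ = K ! * ∏ m ∈ Ico 1 n, (1 + K * p / m) := by
  induction n, hn using Nat.le_induction with
  | base =>
    have hH1 : ∀ᵐ ω ∂μ, ((lazyH X 1 ω).ascFactorial K : ℝ) = K ! :=
      hX1.mono fun ω hω => by simp [lazyH, hω, one_ascFactorial]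
    simp [integral_congr_ae hH1]
  | succ n hn ih =>
    rw [integral_ascFactorial_lazyH_succ hadp hXval (hcond n hn), ih, prod_Ico_succ_top hn]
    ring

theorem tendsto_integral_ascFactorial_lazyH_div_rpow [IsProbabilityMeasure μ]
    (hp : 0 ≤ p) (hadp : ∀ n, Measurable[ℱ n] (X n)) (hXval : ∀ n ω, X n ω ≤ 1)
    (hX1 : ∀ᵐ ω ∂μ, X 1 ω = 1)
    (hcond : ∀ n : ℕ, 1 ≤ n →
      μ[(fun ω => (X (n + 1) ω : ℝ)) | ℱ n] =ᵐ[μ] fun ω => p * (lazyH X n ω : ℝ) / n)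
    (K : ℕ) :
    Tendsto (fun n : ℕ => (∫ ω, ((lazyH X n ω).ascFactorial K : ℝ) ∂μ) / (n : ℝ) ^ (K * p))
      atTop (𝓝 (K ! / Gamma (1 + K * p))) := by
  have hlim := (tendsto_prod_Ico_one_add_div_div_rpow (by positivity : 0 ≤ (K : ℝ) * p)).const_mul
    (K ! : ℝ)
  rw [← div_eq_mul_inv] at hlim
  refine hlim.congr' ?_
  filter_upwards [eventually_ge_atTop 1] with n hn
  rw [integral_ascFactorial_lazyH hadp hXval hX1 hcond K hn, mul_div_assoc]

theorem tendsto_integral_ascFactorial_lazyH_div_rpow_succ [IsProbabilityMeasure μ]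
    (hp : 0 < p) (hadp : ∀ n, Measurable[ℱ n] (X n)) (hXval : ∀ n ω, X n ω ≤ 1)
    (hX1 : ∀ᵐ ω ∂μ, X 1 ω = 1)
    (hcond : ∀ n : ℕ, 1 ≤ n →
      μ[(fun ω => (X (n + 1) ω : ℝ)) | ℱ n] =ᵐ[μ] fun ω => p * (lazyH X n ω : ℝ) / n)
    (K : ℕ) :
    Tendsto (fun n : ℕ => (∫ ω, ((lazyH X n ω).ascFactorial K : ℝ) ∂μ) /
      (n : ℝ) ^ (((K + 1 : ℕ) : ℝ) * p)) atTop (𝓝 0) := by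
  have hdecay : Tendsto (fun n : ℕ => (n : ℝ) ^ (-p)) atTop (𝓝 0) :=
    (tendsto_rpow_neg_atTop hp).comp tendsto_natCast_atTop_atTop
  have hlim := (tendsto_integral_ascFactorial_lazyH_div_rpow hp.le hadp hXval hX1 hcond K).mul
    hdecay
  rw [mul_zero] at hlim
  refine hlim.congr' ?_
  filter_upwards [eventually_ge_atTop 1] with n hn
  have hn0 : (0 : ℝ) < n := by exact_mod_cast hn
  have hKp : 0 < (n : ℝ) ^ ((K : ℝ) * p) := rpow_pos_of_pos hn0 _
  have hp' : 0 < (n : ℝ) ^ p := rpow_pos_of_pos hn0 _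
  rw [Nat.cast_succ, add_mul, one_mul, rpow_add hn0, rpow_neg hn0.le]
  field_simp

theorem integral_pow_lazyH_le [IsFiniteMeasure μ] (hadp : ∀ n, Measurable[ℱ n] (X n))
    (hXval : ∀ n ω, X n ω ≤ 1) (n K : ℕ) :
    ∫ ω, (lazyH X n ω : ℝ) ^ K ∂μ ≤ ∫ ω, ((lazyH X n ω).ascFactorial K : ℝ) ∂μ :=
  integral_mono (integrable_comp_lazyH hadp hXval (fun h => (h : ℝ) ^ K) n)
    (integrable_comp_lazyH hadp hXval (fun h => (h.ascFactorial K : ℝ)) n) fun ω => by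
      exact_mod_cast pow_succ_le_ascFactorial (lazyH X n ω) K

theorem integral_ascFactorial_lazyH_le [IsFiniteMeasure μ] (hadp : ∀ n, Measurable[ℱ n] (X n))
    (hXval : ∀ n ω, X n ω ≤ 1) (n j : ℕ) :
    ∫ ω, ((lazyH X n ω).ascFactorial (j + 1) : ℝ) ∂μ ≤
      ∫ ω, (lazyH X n ω : ℝ) ^ (j + 1) ∂μ
        + (j + 1).choose 2 * ∫ ω, ((lazyH X n ω).ascFactorial j : ℝ) ∂μ := by
  have hpow := integrable_comp_lazyH (μ := μ) hadp hXval (fun h => (h : ℝ) ^ (j + 1)) n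
  have hasc := integrable_comp_lazyH (μ := μ) hadp hXval (fun h => (h.ascFactorial j : ℝ)) n
  rw [← integral_const_mul, ← integral_add hpow (hasc.const_mul _)]
  exact integral_mono
    (integrable_comp_lazyH hadp hXval (fun h => (h.ascFactorial (j + 1) : ℝ)) n)
    (hpow.add (hasc.const_mul _))
    fun ω => by
      have := (Nat.cast_le (α := ℝ)).2 (ascFactorial_succ_le_pow_add (lazyH X n ω) j)
      push_cast at this ⊢
      exact this

end LazyWalk

theorem stmt7_general {Ω : Type*} {m0 : MeasurableSpace Ω} (μ : Measure Ω) [IsProbabilityMeasure μ]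
    (ℱ : Filtration ℕ m0) (p : ℝ) (hp : 0 < p)
    (X : ℕ → Ω → ℕ)
    (hXval : ∀ n ω, X n ω ≤ 1)
    (hX1 : ∀ᵐ ω ∂μ, X 1 ω = 1)
    (hadp : ∀ n, Measurable[ℱ n] (X n))
    (hcond : ∀ n : ℕ, 1 ≤ n →
      μ[(fun ω => (X (n + 1) ω : ℝ)) | ℱ n] =ᵐ[μ]
        fun ω => p * (lazyH X n ω : ℝ) / n) :
    ∀ k : ℕ, 1 ≤ k →
      Tendsto (fun n : ℕ => ∫ ω, ((lazyH X n ω : ℝ) / (n : ℝ) ^ p) ^ k ∂μ)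
        atTop (nhds ((k.factorial : ℝ) / Real.Gamma (1 + k * p))) := by
  intro k hk
  obtain ⟨j, rfl⟩ : ∃ j, k = j + 1 := ⟨k - 1, by omega⟩
  have hmoment := tendsto_integral_ascFactorial_lazyH_div_rpow hp.le hadp hXval hX1 hcond (j + 1)
  have hlower := hmoment.sub
    ((tendsto_integral_ascFactorial_lazyH_div_rpow_succ hp hadp hXval hX1 hcond j).const_mul
      (((j + 1).choose 2 : ℕ) : ℝ))
  rw [mul_zero, sub_zero] at hlower
  refine tendsto_of_tendsto_of_tendsto_of_le_of_le hlower hmoment (fun n => ?_) (fun n => ?_)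
  · rw [integral_div_rpow_pow _ n.cast_nonneg, ← mul_div_assoc, ← sub_div]
    refine div_le_div_of_nonneg_right ?_ (by positivity)
    linarith [integral_ascFactorial_lazyH_le (μ := μ) hadp hXval n j]
  · rw [integral_div_rpow_pow _ n.cast_nonneg]
    exact div_le_div_of_nonneg_right (integral_pow_lazyH_le hadp hXval n (j + 1)) (by positivity)

theorem stmt7 {Ω : Type*} {m0 : MeasurableSpace Ω} (μ : Measure Ω) [IsProbabilityMeasure μ]
    (ℱ : Filtration ℕ m0) (p : ℝ) (hp : 0 < p) (hp1 : p < 1)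
    (X : ℕ → Ω → ℕ)
    (hXval : ∀ n ω, X n ω ≤ 1)
    (hX1 : ∀ᵐ ω ∂μ, X 1 ω = 1)
    (hadp : ∀ n, Measurable[ℱ n] (X n))
    (hcond : ∀ n : ℕ, 1 ≤ n →
      μ[(fun ω => (X (n + 1) ω : ℝ)) | ℱ n] =ᵐ[μ]
        fun ω => p * (lazyH X n ω : ℝ) / n) :
    ∀ k : ℕ, 1 ≤ k →
      Tendsto (fun n : ℕ => ∫ ω, ((lazyH X n ω : ℝ) / (n : ℝ) ^ p) ^ k ∂μ)
        atTop (nhds ((k.factorial : ℝ) / Real.Gamma (1 + k * p))) :=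
  stmt7_general μ ℱ p hp X hXval hX1 hadp hcond
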